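/- For every n ≥ 0, n! = Σ_{λ⊢n} (f_λ)², where f_λ is the number of standard Young tableaux of shape λ. -/

import Mathlib

/-- `YDCovers μ λ` means `μ ⋖ λ` in Young's lattice: `μ ⊆ λ` and `|λ| = |μ| + 1`. -/
def YDCovers (μ ν : YoungDiagram) : Prop :=
  μ.cells ⊆ ν.cells ∧ ν.cells.card = μ.cells.card + 1

lemma YD_row_lt_card {l : YoungDiagram} {i j : ℕ} (h : (i, j) ∈ l) :
    i < l.cells.card := by
  have hsub : (Finset.range (i + 1)).image (fun k => (k, j)) ⊆ l.cells := by
    intro p hp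
    simp only [Finset.mem_image, Finset.mem_range] at hp
    obtain ⟨k, hk, rfl⟩ := hp
    simpa [YoungDiagram.mem_cells] using
      l.up_left_mem (Nat.lt_succ_iff.mp hk) le_rfl h
  have hc := Finset.card_le_card hsub
  rwa [Finset.card_image_of_injective _ (fun a b hab => by
      simpa using congrArg Prod.fst hab), Finset.card_range] at hc

lemma YD_col_lt_card {l : YoungDiagram} {i j : ℕ} (h : (i, j) ∈ l) :
    j < l.cells.card := by
  have hsub : (Finset.range (j + 1)).image (fun k => (i, k)) ⊆ l.cells := by
    intro p hp
    simp only [Finset.mem_image, Finset.mem_range] at hp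
    obtain ⟨k, hk, rfl⟩ := hp
    simpa [YoungDiagram.mem_cells] using
      l.up_left_mem le_rfl (Nat.lt_succ_iff.mp hk) h
  have hc := Finset.card_le_card hsub
  rwa [Finset.card_image_of_injective _ (fun a b hab => by
      simpa using congrArg Prod.snd hab), Finset.card_range] at hc

lemma YD_finite_bounded (B : Finset (ℕ × ℕ)) :
    {l : YoungDiagram | l.cells ⊆ B}.Finite := by
  have himg : (YoungDiagram.cells '' {l : YoungDiagram | l.cells ⊆ B}).Finite := by
    refine Set.Finite.subset (B.powerset : Finset (Finset (ℕ × ℕ))).finite_toSet ?_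
    rintro s ⟨l, hl, rfl⟩
    simpa using hl
  refine Set.Finite.of_finite_image himg ?_
  intro a _ b _ hab
  cases a; cases b; simpa using hab

lemma YD_finite_down (l : YoungDiagram) : {m : YoungDiagram | YDCovers m l}.Finite :=
  (YD_finite_bounded l.cells).subset fun _ hm => hm.1

lemma YD_finite_up (l : YoungDiagram) : {n : YoungDiagram | YDCovers l n}.Finite := by
  refine (YD_finite_bounded
    (Finset.range (l.cells.card + 1) ×ˢ Finset.range (l.cells.card + 1))).subset ?_
  rintro n ⟨_, hcard⟩ c hc
  obtain ⟨i, j⟩ := c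
  have hmem : (i, j) ∈ n := by simpa [YoungDiagram.mem_cells] using hc
  have h1 : i < n.cells.card := YD_row_lt_card hmem
  have h2 : j < n.cells.card := YD_col_lt_card hmem
  simp only [Finset.mem_product, Finset.mem_range]
  omega

/-- The set 𝒰(λ) of diagrams covering `l`, as a `Finset`. -/
noncomputable def upFinset (l : YoungDiagram) : Finset YoungDiagram :=
  (YD_finite_up l).toFinset

/-- The set 𝒟(λ) of diagrams covered by `l`, as a `Finset`. -/
noncomputable def downFinset (l : YoungDiagram) : Finset YoungDiagram :=
  (YD_finite_down l).toFinset

/-- Standard Young tableaux of shape `l`, encoded as saturated chains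
`⊥ = T 0 ⋖ T 1 ⋖ ⋯ ⋖ T n = l` in Young's lattice. -/
def SYTset (l : YoungDiagram) : Set (ℕ → YoungDiagram) :=
  {T | T 0 = ⊥ ∧ (∀ i, i < l.cells.card → YDCovers (T i) (T (i + 1))) ∧
    ∀ i, l.cells.card ≤ i → T i = l}

/-- `fTab l` is the number of standard Young tableaux of shape `l`. -/
noncomputable def fTab (l : YoungDiagram) : ℕ := Nat.card (SYTset l)

/-- arm-length of a cell -/
def armLen (l : YoungDiagram) (c : ℕ × ℕ) : ℕ := l.rowLen c.1 - (c.2 + 1)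

/-- leg-length of a cell -/
def legLen (l : YoungDiagram) (c : ℕ × ℕ) : ℕ := l.colLen c.2 - (c.1 + 1)

/-- hook-length of a cell -/
def hookLen (l : YoungDiagram) (c : ℕ × ℕ) : ℕ := armLen l c + legLen l c + 1

/-- product of all hook-lengths of a diagram -/
def Hprod (l : YoungDiagram) : ℕ := ∏ c ∈ l.cells, hookLen l c

/-- For `r ⋖ k`, the unique box of `k / r`. -/
def diffBox (r k : YoungDiagram) : ℕ × ℕ := (k.cells \ r.cells).sup id

/-- Given the removed box `bm = λ/μ` and the added box `bn = ν/λ`, the unique cell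
`c_{μ,ν}` of `λ` in the row of one box and the column of the other. -/
def cellC (l : YoungDiagram) (bm bn : ℕ × ℕ) : ℕ × ℕ :=
  if (bm.1, bn.2) ∈ l.cells then (bm.1, bn.2) else (bn.1, bm.2)

/-- The field ℚ(q,t). -/
abbrev Kqt : Type := FractionRing (MvPolynomial (Fin 2) ℚ)

noncomputable def qq : Kqt := algebraMap (MvPolynomial (Fin 2) ℚ) Kqt (MvPolynomial.X 0)
noncomputable def tt : Kqt := algebraMap (MvPolynomial (Fin 2) ℚ) Kqt (MvPolynomial.X 1)

/-- `[h_κ(c)]^ℓ = 1 - q^{a} t^{ℓ+1}`. -/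
noncomputable def hkL (k : YoungDiagram) (c : ℕ × ℕ) : Kqt :=
  1 - qq ^ armLen k c * tt ^ (legLen k c + 1)

/-- `[h_κ(c)]^a = 1 - q^{a+1} t^{ℓ}`. -/
noncomputable def hkA (k : YoungDiagram) (c : ℕ × ℕ) : Kqt :=
  1 - qq ^ (armLen k c + 1) * tt ^ legLen k c

/-- `b_κ(c)`. -/
noncomputable def bqt (k : YoungDiagram) (c : ℕ × ℕ) : Kqt := hkL k c / hkA k c

/-- cells of `r` in the row of the box `k/r` (the set ℛ_{κ/ρ}). -/
def rowCells (r k : YoungDiagram) : Finset (ℕ × ℕ) :=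
  r.cells.filter (fun c => c.1 = (diffBox r k).1)

/-- cells of `r` in the column of the box `k/r` (the set 𝒞_{κ/ρ}). -/
def colCells (r k : YoungDiagram) : Finset (ℕ × ℕ) :=
  r.cells.filter (fun c => c.2 = (diffBox r k).2)

/-- `ψ_{κ/ρ}(q,t)` for a single-box skew shape `κ/ρ`. -/
noncomputable def psiE (r k : YoungDiagram) : Kqt :=
  ∏ c ∈ rowCells r k \ colCells r k, bqt r c / bqt k c

/-- `φ_{κ/ρ}(q,t)` for a single-box skew shape `κ/ρ`. -/
noncomputable def phiE (r k : YoungDiagram) : Kqt :=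
  bqt k (diffBox r k) * ∏ c ∈ colCells r k, bqt k c / bqt r c

/-- `α_{κ/ρ}`. -/
noncomputable def alphaE (r k : YoungDiagram) : Kqt :=
  (∏ c ∈ rowCells r k, hkL r c / hkL k c) * ∏ c ∈ colCells r k, hkA r c / hkA k c

/-- `ᾱ_{κ/ρ}`. -/
noncomputable def alphaBarE (r k : YoungDiagram) : Kqt :=
  (∏ c ∈ rowCells r k, hkA r c / hkA k c) * ∏ c ∈ colCells r k, hkL r c / hkL k c

/-- `η_{ν/λ/μ}` in terms of the removed box `bm = λ/μ` and the added box `bn = ν/λ`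
(rows and columns here are 0-indexed, so e.g. `r_ν - r_μ = bn.1 - bm.1`). -/
noncomputable def etaE (bm bn : ℕ × ℕ) : Kqt :=
  (1 - qq) * (1 - tt) /
    ((1 - qq ^ ((bm.2 : ℤ) - bn.2) * tt ^ ((bn.1 : ℤ) - bm.1)) *
     (1 - qq ^ ((bm.2 : ℤ) - bn.2 + 1) * tt ^ ((bn.1 : ℤ) - bm.1 - 1)))

/-- `𝒫_λ(λ → ν) = t^{r_ν - 1} α_{ν/λ}` (0-indexed: `r_ν - 1 = (diffBox l n).1`). -/
noncomputable def Ptop (l n : YoungDiagram) : Kqt :=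
  tt ^ (diffBox l n).1 * alphaE l n

/-- `𝒫_λ(μ → ν)` for `μ ∈ 𝒟(λ)`. -/
noncomputable def Pmove (l m n : YoungDiagram) : Kqt :=
  tt ^ (((diffBox l n).1 : ℤ) - (diffBox m l).1 - 1) * (alphaE l n / alphaE m l) *
    etaE (diffBox m l) (diffBox l n)

/-- `𝒫̄_λ(λ ← ν) = t^{r_ν - 1} ᾱ_{ν/λ}`. -/
noncomputable def PbarTop (l n : YoungDiagram) : Kqt :=
  tt ^ (diffBox l n).1 * alphaBarE l n

/-- `𝒫̄_λ(μ ← ν)` for `μ ∈ 𝒟(λ)`. -/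
noncomputable def PbarMove (l m n : YoungDiagram) : Kqt :=
  tt ^ (((diffBox l n).1 : ℤ) - (diffBox m l).1 - 1) * (alphaBarE l n / alphaBarE m l) *
    etaE (diffBox m l) (diffBox l n)

/-- `ψ_T(q,t)` for a standard tableau encoded as a chain of shapes. -/
noncomputable def psiT (n : ℕ) (T : ℕ → YoungDiagram) : Kqt :=
  ∏ i ∈ Finset.range n, psiE (T i) (T (i + 1))

/-- `φ_T(q,t)` for a standard tableau encoded as a chain of shapes. -/
noncomputable def phiT (n : ℕ) (T : ℕ → YoungDiagram) : Kqt :=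
  ∏ i ∈ Finset.range n, phiE (T i) (T (i + 1))

/-- The up operator `U` on ℚ𝕐. -/
noncomputable def Uop : Module.End ℚ (YoungDiagram →₀ ℚ) :=
  Finsupp.lsum ℚ fun l => LinearMap.toSpanSingleton ℚ _
    (∑ n ∈ upFinset l, Finsupp.single n (1 : ℚ))

/-- The down operator `D` on ℚ𝕐. -/
noncomputable def Dop : Module.End ℚ (YoungDiagram →₀ ℚ) :=
  Finsupp.lsum ℚ fun l => LinearMap.toSpanSingleton ℚ _
    (∑ m ∈ downFinset l, Finsupp.single m (1 : ℚ))

/-- The (q,t)-up operator `U_{q,t}`. -/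
noncomputable def Uqt : Module.End Kqt (YoungDiagram →₀ Kqt) :=
  Finsupp.lsum Kqt fun l => LinearMap.toSpanSingleton Kqt _
    (∑ n ∈ upFinset l, Finsupp.single n (psiE l n))

/-- The (q,t)-down operator `D_{q,t}`. -/
noncomputable def Dqt : Module.End Kqt (YoungDiagram →₀ Kqt) :=
  Finsupp.lsum Kqt fun l => LinearMap.toSpanSingleton Kqt _
    (∑ m ∈ downFinset l, Finsupp.single m (phiE m l))

/-! Stanley's argument with the up and down operators of Young's lattice. Removing its largest
entry, which sits in a corner, turns a standard tableau of shape `λ` into one of some shape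
`μ ⋖ λ`, so `f_λ = ∑_{μ ⋖ λ} f_μ`. In the distributive lattice of diagrams, two distinct diagrams
covered by `ν` have a meet covered by both, and dually; together with the fact that a diagram has
one more outer corner than inner corners, this is the relation `DU - UD = I`, which by induction
on `|μ|` gives `∑_{ν ⋗ μ} f_ν = (|μ| + 1) f_μ`. Hence
`∑_{|λ| = n + 1} f_λ² = ∑_{|μ| = n} ∑_{λ ⋗ μ} f_λ f_μ = (n + 1) ∑_{|μ| = n} f_μ²`. -/

open YoungDiagram

instance : DecidableEq YoungDiagram := fun μ ν =>
  decidable_of_iff (μ.cells = ν.cells) ⟨YoungDiagram.ext, congrArg cells⟩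

lemma ydCovers_iff_covBy_cells {μ ν : YoungDiagram} : YDCovers μ ν ↔ μ.cells ⋖ ν.cells := by
  rw [Finset.covBy_iff_card_sdiff_eq_one, YDCovers]
  refine and_congr_right fun h => ?_
  rw [Finset.card_sdiff_of_subset h]
  have := Finset.card_le_card h
  omega

lemma mem_upFinset {l n : YoungDiagram} : n ∈ upFinset l ↔ YDCovers l n := by
  simp [upFinset]

lemma mem_downFinset {l m : YoungDiagram} : m ∈ downFinset l ↔ YDCovers m l := by
  simp [downFinset]

lemma YDCovers.sup_eq_and_inf_covers {μ ρ ν : YoungDiagram} (hμ : YDCovers μ ν)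
    (hρ : YDCovers ρ ν) (hne : μ ≠ ρ) :
    μ ⊔ ρ = ν ∧ YDCovers (μ ⊓ ρ) μ ∧ YDCovers (μ ⊓ ρ) ρ := by
  simp only [ydCovers_iff_covBy_cells, cells_inf] at *
  have hsup : μ.cells ⊔ ρ.cells = ν.cells :=
    hμ.wcovBy.sup_eq hρ.wcovBy fun h => hne (YoungDiagram.ext h)
  rw [← hsup] at hμ hρ
  exact ⟨YoungDiagram.ext (by rw [cells_sup, ← hsup]; rfl),
    inf_covBy_of_covBy_sup_of_covBy_sup_left hμ hρ,
    inf_covBy_of_covBy_sup_of_covBy_sup_right hμ hρ⟩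

lemma YDCovers.inf_eq_and_covers_sup {l μ ρ : YoungDiagram} (hμ : YDCovers l μ)
    (hρ : YDCovers l ρ) (hne : μ ≠ ρ) :
    μ ⊓ ρ = l ∧ YDCovers μ (μ ⊔ ρ) ∧ YDCovers ρ (μ ⊔ ρ) := by
  simp only [ydCovers_iff_covBy_cells, cells_sup] at *
  have hinf : μ.cells ⊓ ρ.cells = l.cells :=
    hμ.wcovBy.inf_eq hρ.wcovBy fun h => hne (YoungDiagram.ext h)
  rw [← hinf] at hμ hρ
  exact ⟨YoungDiagram.ext (by rw [cells_inf, ← hinf]; rfl),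
    covBy_sup_of_inf_covBy_of_inf_covBy_left hμ hρ,
    covBy_sup_of_inf_covBy_of_inf_covBy_right hμ hρ⟩

def addableRows (μ : YoungDiagram) : Finset ℕ :=
  (Finset.range (μ.colLen 0 + 1)).filter fun i => i = 0 ∨ μ.rowLen i < μ.rowLen (i - 1)

def removableRows (μ : YoungDiagram) : Finset ℕ :=
  (Finset.range (μ.colLen 0)).filter fun i => μ.rowLen (i + 1) < μ.rowLen i

lemma rowLen_pos_iff_lt_colLen {μ : YoungDiagram} {i : ℕ} :
    0 < μ.rowLen i ↔ i < μ.colLen 0 := by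
  rw [← mem_iff_lt_rowLen, mem_iff_lt_colLen]

lemma mem_addableRows {μ : YoungDiagram} {i : ℕ} :
    i ∈ addableRows μ ↔ i = 0 ∨ μ.rowLen i < μ.rowLen (i - 1) := by
  simp only [addableRows, Finset.mem_filter, Finset.mem_range, and_iff_right_iff_imp]
  have := (rowLen_pos_iff_lt_colLen (μ := μ) (i := i - 1))
  omega

lemma mem_removableRows {μ : YoungDiagram} {i : ℕ} :
    i ∈ removableRows μ ↔ μ.rowLen (i + 1) < μ.rowLen i := by
  simp only [removableRows, Finset.mem_filter, Finset.mem_range, and_iff_right_iff_imp]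
  have := (rowLen_pos_iff_lt_colLen (μ := μ) (i := i))
  omega

lemma card_addableRows (μ : YoungDiagram) :
    (addableRows μ).card = (removableRows μ).card + 1 := by
  have h : addableRows μ = insert 0 ((removableRows μ).map (addLeftEmbedding 1)) := by
    ext i
    simp only [mem_addableRows, Finset.mem_insert, Finset.mem_map, mem_removableRows,
      addLeftEmbedding_apply]
    constructor
    · rintro (rfl | h)
      · exact Or.inl rfl
      · rcases i with _ | j
        · exact Or.inl rfl
        · exact Or.inr ⟨j, by simpa using h, add_comm 1 j⟩
    · rintro (rfl | ⟨j, hj, rfl⟩)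
      · exact Or.inl rfl
      · exact Or.inr (by simpa [add_comm] using hj)
  rw [h, Finset.card_insert_of_notMem (by simp), Finset.card_map]

def addCell (μ : YoungDiagram) (i : ℕ) (h : i = 0 ∨ μ.rowLen i < μ.rowLen (i - 1)) :
    YoungDiagram where
  cells := insert (i, μ.rowLen i) μ.cells
  isLowerSet := by
    rintro ⟨a, b⟩ ⟨c, d⟩ ⟨hca : c ≤ a, hdb : d ≤ b⟩ hab
    simp only [Finset.coe_insert, Set.mem_insert_iff, Finset.mem_coe, mem_cells, Prod.ext_iff,
      mem_iff_lt_rowLen] at hab ⊢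
    have := μ.rowLen_anti c a hca
    have := μ.rowLen_anti c (i - 1)
    have := μ.rowLen_anti c i
    omega

def eraseCell (μ : YoungDiagram) (i : ℕ) (h : μ.rowLen (i + 1) < μ.rowLen i) :
    YoungDiagram where
  cells := μ.cells.erase (i, μ.rowLen i - 1)
  isLowerSet := by
    rintro ⟨a, b⟩ ⟨c, d⟩ ⟨hca : c ≤ a, hdb : d ≤ b⟩ hab
    simp only [Finset.coe_erase, Set.mem_sdiff, Finset.mem_coe, mem_cells, Prod.ext_iff,
      mem_iff_lt_rowLen, Set.mem_singleton_iff] at hab ⊢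
    have := μ.rowLen_anti c a hca
    have := μ.rowLen_anti (i + 1) a
    have := μ.rowLen_anti i a
    omega

lemma addCell_covers (μ : YoungDiagram) (i : ℕ) (h : i = 0 ∨ μ.rowLen i < μ.rowLen (i - 1)) :
    YDCovers μ (addCell μ i h) :=
  ydCovers_iff_covBy_cells.2 (Finset.covBy_insert (by simp [mem_iff_lt_rowLen]))

lemma eraseCell_covers (μ : YoungDiagram) (i : ℕ) (h : μ.rowLen (i + 1) < μ.rowLen i) :
    YDCovers (eraseCell μ i h) μ :=
  ydCovers_iff_covBy_cells.2 (Finset.erase_covBy (by simp [mem_iff_lt_rowLen]; omega))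

lemma YDCovers.exists_eq_addCell {μ ν : YoungDiagram} (h : YDCovers μ ν) :
    ∃ i, ∃ hi : i = 0 ∨ μ.rowLen i < μ.rowLen (i - 1), ν = addCell μ i hi := by
  obtain ⟨⟨i, j⟩, hij, hins⟩ := (ydCovers_iff_covBy_cells.1 h).exists_finset_insert
  have hmem : ∀ x, x ∈ ν ↔ x = (i, j) ∨ x ∈ μ := fun x => by
    rw [← mem_cells, ← hins, Finset.mem_insert, mem_cells]
  have hj : j = μ.rowLen i := by
    have h₁ := hmem (i, μ.rowLen i)
    have h₂ := hmem (i, j)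
    simp only [mem_cells, mem_iff_lt_rowLen, not_lt, Prod.mk.injEq, true_and, lt_self_iff_false,
      or_false, true_or, iff_true] at hij h₁ h₂
    omega
  subst hj
  have hi : i = 0 ∨ μ.rowLen i < μ.rowLen (i - 1) := by
    have h₁ := hmem (i - 1, μ.rowLen i)
    have h₂ := hmem (i, μ.rowLen i)
    have := ν.rowLen_anti (i - 1) i (Nat.sub_le i 1)
    simp only [mem_iff_lt_rowLen, Prod.mk.injEq, and_true, lt_self_iff_false, or_false,
      iff_true] at h₁ h₂
    omega
  exact ⟨i, hi, YoungDiagram.ext hins.symm⟩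

lemma YDCovers.exists_eq_eraseCell {m μ : YoungDiagram} (h : YDCovers m μ) :
    ∃ i, ∃ hi : μ.rowLen (i + 1) < μ.rowLen i, m = eraseCell μ i hi := by
  obtain ⟨⟨i, j⟩, hij, herase⟩ := (ydCovers_iff_covBy_cells.1 h).exists_finset_erase
  have hmem : ∀ x, x ∈ m ↔ x ≠ (i, j) ∧ x ∈ μ := fun x => by
    rw [← mem_cells, ← herase, Finset.mem_erase, mem_cells]
  have hj : j = μ.rowLen i - 1 ∧ μ.rowLen (i + 1) < μ.rowLen i := by
    have h₁ := hmem (i, j)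
    have h₂ := hmem (i, j + 1)
    have h₃ := hmem (i + 1, j)
    have := m.rowLen_anti i (i + 1) (Nat.le_succ i)
    simp only [mem_cells, mem_iff_lt_rowLen, ne_eq, not_true_eq_false, false_and, iff_false,
      not_lt, Prod.mk.injEq, Nat.add_eq_left, one_ne_zero, and_false, not_false_eq_true, true_and,
      and_true] at hij h₁ h₂ h₃
    omega
  obtain ⟨rfl, hi⟩ := hj
  exact ⟨i, hi, YoungDiagram.ext herase.symm⟩

lemma card_upFinset (μ : YoungDiagram) : (upFinset μ).card = (addableRows μ).card := by
  refine (Finset.card_bij (fun i hi => addCell μ i (mem_addableRows.1 hi)) ?_ ?_ ?_).symm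
  · intro i hi
    exact mem_upFinset.2 (addCell_covers μ i _)
  · intro a _ b hb hab
    have : (a, μ.rowLen a) ∈ (addCell μ b (mem_addableRows.1 hb)).cells := by
      rw [← hab]; exact Finset.mem_insert_self _ _
    change (a, μ.rowLen a) ∈ insert _ μ.cells at this
    rw [Finset.mem_insert, mem_cells, mem_iff_lt_rowLen, Prod.mk.injEq] at this
    omega
  · intro ν hν
    obtain ⟨i, hi, rfl⟩ := (mem_upFinset.1 hν).exists_eq_addCell
    exact ⟨i, mem_addableRows.2 hi, rfl⟩

lemma card_downFinset (μ : YoungDiagram) : (downFinset μ).card = (removableRows μ).card := by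
  refine (Finset.card_bij (fun i hi => eraseCell μ i (mem_removableRows.1 hi)) ?_ ?_ ?_).symm
  · intro i hi
    exact mem_downFinset.2 (eraseCell_covers μ i _)
  · intro a ha b hb hab
    have hnot : (a, μ.rowLen a - 1) ∉ (eraseCell μ b (mem_removableRows.1 hb)).cells := by
      rw [← hab]; exact Finset.notMem_erase _ _
    have := mem_removableRows.1 ha
    change (a, μ.rowLen a - 1) ∉ μ.cells.erase _ at hnot
    rw [Finset.mem_erase, mem_cells, mem_iff_lt_rowLen, ne_eq, Prod.mk.injEq] at hnot
    omega
  · intro m hm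
    obtain ⟨i, hi, rfl⟩ := (mem_downFinset.1 hm).exists_eq_eraseCell
    exact ⟨i, mem_removableRows.2 hi, rfl⟩

lemma card_upFinset_eq_card_downFinset_add_one (μ : YoungDiagram) :
    (upFinset μ).card = (downFinset μ).card + 1 := by
  rw [card_upFinset, card_downFinset, card_addableRows]

lemma eq_bot_of_card_cells_eq_zero {l : YoungDiagram} (h : l.cells.card = 0) : l = ⊥ :=
  YoungDiagram.ext (by rw [Finset.card_eq_zero.1 h, cells_bot])

section StandardTableaux

variable {l : YoungDiagram} {N : ℕ}

lemma card_cells_of_mem_SYTset {T : ℕ → YoungDiagram} (hT : T ∈ SYTset l) {i : ℕ}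
    (hi : i ≤ l.cells.card) : (T i).cells.card = i := by
  induction i with
  | zero => rw [hT.1, cells_bot, Finset.card_empty]
  | succ k ih => rw [(hT.2.1 k hi).2, ih (by omega)]

lemma SYTset_bot : SYTset ⊥ = {fun _ => ⊥} := by
  ext T
  simp only [SYTset, cells_bot, Finset.card_empty, Set.mem_singleton_iff,
    Nat.not_lt_zero, zero_le, forall_const, IsEmpty.forall_iff, true_and, funext_iff]
  exact ⟨fun h => h.2, fun h => ⟨h 0, h⟩⟩

lemma ydCovers_of_mem_SYTset {T : ℕ → YoungDiagram} (hN : l.cells.card = N + 1)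
    (hT : T ∈ SYTset l) : YDCovers (T N) l :=
  hT.2.2 (N + 1) hN.le ▸ hT.2.1 N (by omega)

lemma truncate_mem_SYTset {T : ℕ → YoungDiagram} (hN : l.cells.card = N + 1)
    (hT : T ∈ SYTset l) : (fun i => T (min i N)) ∈ SYTset (T N) := by
  have hTN : (T N).cells.card = N := card_cells_of_mem_SYTset hT (by omega)
  refine ⟨by simpa using hT.1, fun i hi => ?_, fun i hi => by simp [hTN ▸ hi]⟩
  rw [hTN] at hi
  simpa [min_eq_left hi.le, min_eq_left (Nat.succ_le_of_lt hi)] using hT.2.1 i (by omega)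

lemma extend_mem_SYTset {m : YoungDiagram} {S : ℕ → YoungDiagram} (hN : l.cells.card = N + 1)
    (hm : YDCovers m l) (hS : S ∈ SYTset m) :
    (fun i => if i ≤ N then S i else l) ∈ SYTset l := by
  have hmN : m.cells.card = N := by have := hm.2; omega
  refine ⟨by simpa using hS.1, fun i hi => ?_, fun i hi => if_neg (by omega)⟩
  obtain hi | rfl : i < N ∨ i = N := by omega
  · simpa [hi.le, hi] using hS.2.1 i (by omega)
  · simpa [hS.2.2 i hmN.le] using hm

def SYTset.equivSigma (hN : l.cells.card = N + 1) :
    SYTset l ≃ Σ m : downFinset l, SYTset m where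
  toFun T := ⟨⟨T.1 N, mem_downFinset.2 (ydCovers_of_mem_SYTset hN T.2)⟩,
    ⟨fun i => T.1 (min i N), truncate_mem_SYTset hN T.2⟩⟩
  invFun p := ⟨fun i => if i ≤ N then p.2.1 i else l,
    extend_mem_SYTset hN (mem_downFinset.1 p.1.2) p.2.2⟩
  left_inv T := by
    refine Subtype.ext (funext fun i => ?_)
    dsimp only
    split_ifs with hi
    · rw [min_eq_left hi]
    · exact (T.2.2.2 i (by omega)).symm
  right_inv := by
    rintro ⟨⟨m, hm⟩, S, hS⟩
    have hmN : m.cells.card = N := by have := (mem_downFinset.1 hm).2; omega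
    refine Sigma.subtype_ext (Subtype.ext ?_) (funext fun i => ?_)
    · simpa using hS.2.2 N hmN.le
    · change (if min i N ≤ N then S (min i N) else l) = S i
      rw [if_pos (min_le_right i N)]
      rcases le_total i N with hi | hi
      · rw [min_eq_left hi]
      · rw [min_eq_right hi, hS.2.2 N hmN.le, hS.2.2 i (hmN ▸ hi)]

lemma finite_SYTset (l : YoungDiagram) : (SYTset l).Finite := by
  induction hN : l.cells.card generalizing l with
  | zero => simp [eq_bot_of_card_cells_eq_zero hN, SYTset_bot]
  | succ N ih =>
    have (m : downFinset l) : Finite (SYTset m) :=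
      (ih m (by have := (mem_downFinset.1 m.2).2; omega)).to_subtype
    exact Set.finite_coe_iff.1 (Finite.of_equiv _ (SYTset.equivSigma hN).symm)

lemma fTab_bot : fTab ⊥ = 1 := by
  rw [fTab, SYTset_bot, Nat.card_unique]

lemma fTab_eq_sum_downFinset (hN : l.cells.card = N + 1) :
    fTab l = ∑ m ∈ downFinset l, fTab m := by
  have (m : downFinset l) : Finite (SYTset m) := (finite_SYTset m).to_subtype
  rw [fTab, Nat.card_congr (SYTset.equivSigma hN), Nat.card_sigma]
  exact Finset.sum_coe_sort (downFinset l) fTab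

end StandardTableaux

lemma sum_up_down_erase_eq_sum_down_up_erase {M : Type*} [AddCommMonoid M] (μ : YoungDiagram)
    (g : YoungDiagram → M) :
    ∑ ν ∈ upFinset μ, ∑ ρ ∈ (downFinset ν).erase μ, g ρ =
      ∑ l ∈ downFinset μ, ∑ ρ ∈ (upFinset l).erase μ, g ρ := by
  rw [Finset.sum_sigma', Finset.sum_sigma']
  refine Finset.sum_nbij' (fun p => ⟨μ ⊓ p.2, p.2⟩) (fun q => ⟨μ ⊔ q.2, q.2⟩) ?_ ?_ ?_ ?_
    fun _ _ => rfl
  · rintro ⟨ν, ρ⟩ hp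
    simp only [Finset.mem_sigma, Finset.mem_erase, mem_upFinset, mem_downFinset] at hp ⊢
    obtain ⟨-, hμ, hρ⟩ := hp.1.sup_eq_and_inf_covers hp.2.2 (Ne.symm hp.2.1)
    exact ⟨hμ, hp.2.1, hρ⟩
  · rintro ⟨l, ρ⟩ hq
    simp only [Finset.mem_sigma, Finset.mem_erase, mem_upFinset, mem_downFinset] at hq ⊢
    obtain ⟨-, hμ, hρ⟩ := hq.1.inf_eq_and_covers_sup hq.2.2 (Ne.symm hq.2.1)
    exact ⟨hμ, hq.2.1, hρ⟩
  · rintro ⟨ν, ρ⟩ hp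
    simp only [Finset.mem_sigma, Finset.mem_erase, mem_upFinset, mem_downFinset] at hp
    rw [(hp.1.sup_eq_and_inf_covers hp.2.2 (Ne.symm hp.2.1)).1]
  · rintro ⟨l, ρ⟩ hq
    simp only [Finset.mem_sigma, Finset.mem_erase, mem_upFinset, mem_downFinset] at hq
    rw [(hq.1.inf_eq_and_covers_sup hq.2.2 (Ne.symm hq.2.1)).1]

theorem sum_fTab_upFinset (μ : YoungDiagram) :
    ∑ ν ∈ upFinset μ, fTab ν = (μ.cells.card + 1) * fTab μ := by
  induction hn : μ.cells.card using Nat.strong_induction_on generalizing μ with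
  | _ n ih =>
  have hup : ∀ ν ∈ upFinset μ, fTab ν = fTab μ + ∑ ρ ∈ (downFinset ν).erase μ, fTab ρ := by
    intro ν hν
    have hcov := mem_upFinset.1 hν
    rw [fTab_eq_sum_downFinset (hcov.2.trans (congrArg (· + 1) hn)),
      Finset.add_sum_erase _ _ (mem_downFinset.2 hcov)]
  have hdown : ∀ l ∈ downFinset μ, ∑ ρ ∈ (upFinset l).erase μ, fTab ρ + fTab μ = n * fTab l := by
    intro l hl
    have hcov := mem_downFinset.1 hl
    have hcard : l.cells.card + 1 = n := hn ▸ hcov.2.symm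
    rw [Finset.sum_erase_add _ _ (mem_upFinset.2 hcov), ih _ (by omega) l rfl, hcard]
  -- the factor `n` makes this true also for `μ = ⊥`
  have hμ : n * ∑ l ∈ downFinset μ, fTab l = n * fTab μ := by
    rcases n with _ | N
    · simp
    · rw [fTab_eq_sum_downFinset hn]
  have hsplit : ∑ ν ∈ upFinset μ, fTab ν = (upFinset μ).card * fTab μ +
      ∑ ν ∈ upFinset μ, ∑ ρ ∈ (downFinset ν).erase μ, fTab ρ := by
    rw [Finset.sum_congr rfl hup, Finset.sum_add_distrib, Finset.sum_const, smul_eq_mul]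
  have hcommute : ∑ l ∈ downFinset μ, ∑ ρ ∈ (upFinset l).erase μ, fTab ρ +
      (downFinset μ).card * fTab μ = n * fTab μ := by
    rw [← smul_eq_mul, ← Finset.sum_const, ← Finset.sum_add_distrib, Finset.sum_congr rfl hdown,
      ← Finset.mul_sum, hμ]
  rw [sum_up_down_erase_eq_sum_down_up_erase, card_upFinset_eq_card_downFinset_add_one] at hsplit
  linarith

lemma finite_setOf_card_cells_eq (n : ℕ) : {l : YoungDiagram | l.cells.card = n}.Finite := by
  refine (YD_finite_bounded (Finset.range n ×ˢ Finset.range n)).subset fun l hl c hc => ?_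
  have hc' : (c.1, c.2) ∈ l := (mem_cells c).1 hc
  have h₁ := YD_row_lt_card hc'
  have h₂ := YD_col_lt_card hc'
  have hl : l.cells.card = n := hl
  simp only [Finset.mem_product, Finset.mem_range]
  omega

noncomputable def diagramsOfCard (n : ℕ) : Finset YoungDiagram :=
  (finite_setOf_card_cells_eq n).toFinset

lemma mem_diagramsOfCard {n : ℕ} {l : YoungDiagram} : l ∈ diagramsOfCard n ↔ l.cells.card = n :=
  Set.Finite.mem_toFinset _

theorem sum_fTab_sq_diagramsOfCard (n : ℕ) :
    ∑ l ∈ diagramsOfCard n, fTab l ^ 2 = Nat.factorial n := by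
  induction n with
  | zero =>
    have : diagramsOfCard 0 = {⊥} := by
      ext l
      rw [mem_diagramsOfCard, Finset.mem_singleton]
      exact ⟨eq_bot_of_card_cells_eq_zero, fun h => by rw [h, cells_bot, Finset.card_empty]⟩
    rw [this, Finset.sum_singleton, fTab_bot, one_pow, Nat.factorial_zero]
  | succ n ih =>
    calc ∑ l ∈ diagramsOfCard (n + 1), fTab l ^ 2
        = ∑ l ∈ diagramsOfCard (n + 1), ∑ m ∈ downFinset l, fTab l * fTab m := by
          refine Finset.sum_congr rfl fun l hl => ?_
          rw [← Finset.mul_sum, ← fTab_eq_sum_downFinset (mem_diagramsOfCard.1 hl), sq]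
      _ = ∑ m ∈ diagramsOfCard n, ∑ l ∈ upFinset m, fTab l * fTab m := by
          refine Finset.sum_comm' fun l m => ?_
          simp only [mem_diagramsOfCard, mem_downFinset, mem_upFinset]
          rw [and_comm (a := YDCovers m l)]
          exact and_congr_left fun hc => by have := hc.2; omega
      _ = ∑ m ∈ diagramsOfCard n, (n + 1) * fTab m ^ 2 := by
          refine Finset.sum_congr rfl fun m hm => ?_
          rw [← Finset.sum_mul, sum_fTab_upFinset, mem_diagramsOfCard.1 hm, sq, mul_assoc]
      _ = Nat.factorial (n + 1) := by rw [← Finset.mul_sum, ih, Nat.factorial_succ]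

/-- `n! = Σ_{λ ⊢ n} (f_λ)²`. -/
theorem factorial_eq_sum_fTab_sq (n : ℕ) :
    Nat.factorial n = ∑ᶠ l ∈ {l : YoungDiagram | l.cells.card = n}, fTab l ^ 2 := by
  rw [← (finite_setOf_card_cells_eq n).coe_toFinset, finsum_mem_coe_finset]
  exact (sum_fTab_sq_diagramsOfCard n).symm
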